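/- Let (P, ≺) be a finite partially ordered set, let π be an ordering of P, and let τ be a terminal ordering reachable from π. If (x,y) is a critical pair in π, then y precedes x in τ; that is, the relative order of x and y is reversed. -/

import Mathlib

/-- An ordering of a finite poset `P`: a list of all elements of `P` without repetition. -/
def IsOrdering {P : Type*} (π : List P) : Prop := π.Nodup ∧ ∀ x : P, x ∈ π

/-- A permissible swap: exchange two adjacent elements `a b` with `a ≺ b`. -/
def PermissibleSwap {P : Type*} [PartialOrder P] (π σ : List P) : Prop :=
  ∃ (l₁ l₂ : List P) (a b : P), a < b ∧ π = l₁ ++ a :: b :: l₂ ∧ σ = l₁ ++ b :: a :: l₂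

/-- `σ` is reachable from `π` by a finite (possibly empty) sequence of permissible swaps. -/
def Reachable {P : Type*} [PartialOrder P] (π σ : List P) : Prop :=
  Relation.ReflTransGen PermissibleSwap π σ

/-- An ordering is terminal if no permissible swap applies to it. -/
def Terminal {P : Type*} [PartialOrder P] (π : List P) : Prop :=
  ∀ σ : List P, ¬ PermissibleSwap π σ

/-- `x` precedes `y` in the list `π` (occurs earlier). -/
def Precedes {P : Type*} [DecidableEq P] (π : List P) (x y : P) : Prop :=
  π.idxOf x < π.idxOf y

/-- `x` and `y` are incomparable: neither `x ≺ y` nor `y ≺ x`. -/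
def Incomp {P : Type*} [PartialOrder P] (x y : P) : Prop := ¬ x < y ∧ ¬ y < x

/-- `c` is an `(x,y)`-fence in `π`: a sequence starting at `x`, ending at `y`, whose
elements appear in this order (not necessarily consecutively) in `π`, with consecutive
elements incomparable. -/
def IsFence {P : Type*} [PartialOrder P] (π : List P) (x y : P) (c : List P) : Prop :=
  c.Chain' Incomp ∧ c.Sublist π ∧ c.head? = some x ∧ c.getLast? = some y

/-- There exists an `(x,y)`-fence in `π`. -/
def HasFence {P : Type*} [PartialOrder P] (π : List P) (x y : P) : Prop :=
  ∃ c : List P, IsFence π x y c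

/-- `(x,y)` is a critical pair in `π`: `x ≺ y`, `x` precedes `y` in `π`,
and there is no `(x,y)`-fence in `π`. -/
def Critical {P : Type*} [PartialOrder P] [DecidableEq P] (π : List P) (x y : P) : Prop :=
  x < y ∧ Precedes π x y ∧ ¬ HasFence π x y

/-!
Along any sequence of permissible swaps starting at `π`, either `y` already precedes `x`, or
`x` still precedes `y` and there is no `(x,y)`-fence. A swap can only reverse the pair `x, y`
itself, and it cannot create a fence, because the two swapped elements are comparable and so are
never consecutive on a fence. In the terminal ordering `τ` no adjacent pair is increasing, and
walking greedily from `x` to `y` through such a list produces an `(x,y)`-fence whenever `y ⊀ x`;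
hence `y` must precede `x` in `τ`.
-/

open List

theorem List.Sublist.swap_or_pair_infix {α : Type*} {c l₁ l₂ : List α} {a b : α}
    (h : c <+ l₁ ++ a :: b :: l₂) : c <+ l₁ ++ b :: a :: l₂ ∨ [a, b] <:+: c := by
  obtain ⟨d₁, d, rfl, h₁, hd⟩ := sublist_append_iff.1 h
  obtain ⟨d₂, d₃, rfl, h₂, h₃⟩ := (sublist_append_iff (r₁ := [a, b])).1 hd
  by_cases hab : d₂ = [a, b]
  · exact .inr ⟨d₁, d₃, by simp [hab]⟩
  · have h₂' : d₂ <+ [b, a] := by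
      simp only [sublist_cons_iff, sublist_nil] at h₂ ⊢
      aesop
    exact .inl (h₁.append (h₂'.append h₃))

section Precedes

variable {P : Type*} [DecidableEq P]

theorem pair_sublist_of_precedes {l : List P} {x y : P} (hy : y ∈ l) (h : Precedes l x y) :
    [x, y] <+ l := by
  induction l with
  | nil => simp at hy
  | cons z l ih =>
    simp only [Precedes, idxOf_cons, beq_iff_eq, cond_eq_ite] at h ih
    by_cases hzx : z = x
    · subst hzx
      have hyl : y ∈ l := by grind
      exact (singleton_sublist.2 hyl).cons_cons z
    · have hyl : y ∈ l := by grind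
      exact (ih hyl (by grind)).cons z

theorem Precedes.of_pair_sublist {l : List P} {x y : P} (hl : l.Nodup) (h : [x, y] <+ l) :
    Precedes l x y := by
  induction l with
  | nil => simp at h
  | cons z l ih =>
    rw [nodup_cons] at hl
    simp only [Precedes, idxOf_cons, beq_iff_eq, cond_eq_ite] at ih ⊢
    rcases sublist_cons_iff.1 h with h' | ⟨r, hr, hr'⟩
    · have hx : x ∈ l := h'.subset (by simp)
      have hy : y ∈ l := h'.subset (by simp)
      grind
    · obtain ⟨rfl, rfl⟩ : x = z ∧ [y] = r := by simpa using hr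
      grind

end Precedes

section Swaps

variable {P : Type*} [PartialOrder P] {σ σ' π τ : List P} {x y : P}

theorem PermissibleSwap.perm (h : PermissibleSwap σ σ') : σ ~ σ' := by
  obtain ⟨l₁, l₂, a, b, -, rfl, rfl⟩ := h
  exact (Perm.swap b a l₂).append_left l₁

theorem Reachable.perm (h : Reachable π τ) : π ~ τ := by
  induction h with
  | refl => rfl
  | tail _ hstep ih => exact ih.trans hstep.perm

theorem PermissibleSwap.pair_sublist (h : PermissibleSwap σ σ') (hs : [x, y] <+ σ) :
    [x, y] <+ σ' ∨ (x < y ∧ [y, x] <+ σ') := by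
  obtain ⟨l₁, l₂, a, b, hab, rfl, rfl⟩ := h
  rcases hs.swap_or_pair_infix with hs' | hinf
  · exact .inl hs'
  · obtain ⟨rfl, rfl⟩ : a = x ∧ b = y := by simpa using hinf.eq_of_length rfl
    exact .inr ⟨hab, (by simp : [b, a] <+ b :: a :: l₂).trans (sublist_append_right l₁ _)⟩

theorem HasFence.of_permissibleSwap (h : PermissibleSwap σ σ') (hf : HasFence σ' x y) :
    HasFence σ x y := by
  obtain ⟨l₁, l₂, a, b, hab, rfl, rfl⟩ := h
  obtain ⟨c, hchain, hsub, hhead, hlast⟩ := hf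
  rcases hsub.swap_or_pair_infix with hsub' | hinf
  · exact ⟨c, hchain, hsub', hhead, hlast⟩
  · exact absurd hab (isChain_pair.1 (hchain.infix hinf)).2

theorem PermissibleSwap.reversed_or_unfenced (h : PermissibleSwap σ σ') (hyx : ¬ y < x)
    (hσ : [y, x] <+ σ ∨ ([x, y] <+ σ ∧ ¬ HasFence σ x y)) :
    [y, x] <+ σ' ∨ ([x, y] <+ σ' ∧ ¬ HasFence σ' x y) := by
  rcases hσ with hrev | ⟨hfwd, hnf⟩
  · exact .inl ((h.pair_sublist hrev).resolve_right (fun h' => hyx h'.1))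
  · rcases h.pair_sublist hfwd with hfwd' | ⟨-, hrev'⟩
    · exact .inr ⟨hfwd', fun hf => hnf (hf.of_permissibleSwap h)⟩
    · exact .inl hrev'

theorem Reachable.reversed_or_unfenced (h : Reachable π τ) (hyx : ¬ y < x)
    (hπ : [y, x] <+ π ∨ ([x, y] <+ π ∧ ¬ HasFence π x y)) :
    [y, x] <+ τ ∨ ([x, y] <+ τ ∧ ¬ HasFence τ x y) := by
  induction h with
  | refl => exact hπ
  | tail _ hstep ih => exact hstep.reversed_or_unfenced hyx ih

end Swaps

section Fences

variable {P : Type*} [PartialOrder P] {l l' τ : List P} {u x y : P}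

theorem HasFence.mono (hl : l <+ l') (h : HasFence l x y) : HasFence l' x y := by
  obtain ⟨c, hchain, hsub, hhead, hlast⟩ := h
  exact ⟨c, hchain, hsub.trans hl, hhead, hlast⟩

theorem HasFence.cons (hu : Incomp u x) (h : HasFence l x y) : HasFence (u :: l) u y := by
  obtain ⟨c, hchain, hsub, hhead, hlast⟩ := h
  obtain ⟨c, rfl⟩ : ∃ c', c = x :: c' := by
    cases c <;> simp_all
  refine ⟨u :: x :: c, hchain.cons_cons hu, hsub.cons_cons u, rfl, ?_⟩
  simpa [getLast?_cons] using hlast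

/-- The fence is built greedily along `a :: t`: entries below its current end `u` are skipped,
and the first entry `a'` not below `u` is incomparable to it, since `a ≤ u` and `a ≮ a'`. -/
theorem hasFence_of_isChain {a b : P} {t : List P} (hchain : (a :: t).IsChain (¬ · < ·))
    (hb : b ∈ a :: t) (hau : a ≤ u) (hbu : ¬ b < u) : HasFence (u :: t) u b := by
  induction t generalizing a u with
  | nil =>
    obtain rfl : b = a := by simpa using hb
    obtain rfl := eq_of_le_of_not_lt hau hbu
    exact ⟨[b], isChain_singleton b, .refl _, rfl, rfl⟩
  | cons a' t ih =>
    obtain ⟨haa', hchain'⟩ := isChain_cons_cons.1 hchain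
    rcases mem_cons.1 hb with rfl | hb'
    · obtain rfl := eq_of_le_of_not_lt hau hbu
      exact ⟨[b], isChain_singleton b, singleton_sublist.2 mem_cons_self, rfl, rfl⟩
    have hua' : ¬ u < a' := fun h => haa' (hau.trans_lt h)
    by_cases ha'u : a' < u
    · exact (ih hchain' hb' ha'u.le hbu).mono ((sublist_cons_self a' t).cons_cons u)
    by_cases hba' : b < a'
    · have hbt : b ∈ t := (mem_cons.1 hb').resolve_left hba'.ne
      exact ⟨[u, b], isChain_pair.2 ⟨fun h => hua' (h.trans hba'), hbu⟩,
        ((singleton_sublist.2 hbt).cons a').cons_cons u, rfl, rfl⟩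
    exact (ih hchain' hb' le_rfl hba').cons ⟨hua', ha'u⟩

theorem Terminal.of_cons {a : P} (h : Terminal (a :: l)) : Terminal l := by
  rintro σ ⟨l₁, l₂, p, q, hpq, rfl, rfl⟩
  exact h (a :: l₁ ++ q :: p :: l₂) ⟨a :: l₁, l₂, p, q, hpq, rfl, rfl⟩

theorem Terminal.isChain (h : Terminal l) : l.IsChain (¬ · < ·) := by
  induction l with
  | nil => exact isChain_nil
  | cons a l ih =>
    refine (ih h.of_cons).cons ?_
    rintro b hb hab
    obtain ⟨l', rfl⟩ : ∃ l', l = b :: l' := by cases l <;> simp_all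
    exact h _ ⟨[], l', a, b, hab, rfl, rfl⟩

theorem Terminal.hasFence (h : Terminal τ) (hxy : [x, y] <+ τ) (hyx : ¬ y < x) :
    HasFence τ x y := by
  induction τ with
  | nil => simp at hxy
  | cons z τ ih =>
    rcases sublist_cons_iff.1 hxy with hxy' | ⟨r, hr, hyr⟩
    · exact (ih h.of_cons hxy').mono (sublist_cons_self z τ)
    · obtain ⟨rfl, rfl⟩ : x = z ∧ [y] = r := by simpa using hr
      exact hasFence_of_isChain h.isChain (mem_cons_of_mem _ (singleton_sublist.1 hyr)) le_rfl hyx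

end Fences

/-- If `(x,y)` is a critical pair in `π` and `τ` is a terminal ordering
reachable from `π`, then `y` precedes `x` in `τ`. -/
theorem stmt_7 {P : Type*} [PartialOrder P] [DecidableEq P] (π : List P)
    (hπ : IsOrdering π) (τ : List P) (hreach : Reachable π τ) (hterm : Terminal τ)
    (x y : P) (hcrit : Critical π x y) :
    Precedes τ y x := by
  obtain ⟨hxy, hprec, hnofence⟩ := hcrit
  have hyx : ¬ y < x := lt_asymm hxy
  rcases hreach.reversed_or_unfenced hyx
      (.inr ⟨pair_sublist_of_precedes (hπ.2 y) hprec, hnofence⟩) with hrev | ⟨hfwd, hnf⟩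
  · exact Precedes.of_pair_sublist (hreach.perm.nodup_iff.1 hπ.1) hrev
  · exact absurd (hterm.hasFence hfwd hyx) hnf
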